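/- If Sh_f : M̃(f,δ) → M is a shift-invariant shadowing map, then the induced bracket [p,q] = Sh_f(con_f(p,q)), defined for (p,q) ∈ Δ_δ, has uniform contraction: for all ε > 0 there is m ≥ 1 such that for all (p,q) ∈ Δ_δ and all n ≥ m, d(f^n([p,q]), f^n(q)) < ε and d(f^{-n}([p,q]), f^{-n}(p)) < ε. -/

import Mathlib

open Filter Metric Topology

variable {M : Type*}

/-- A `δ`-pseudo-orbit of `f`. -/
def IsPseudoOrbit [MetricSpace M] (f : M → M) (δ : ℝ) (x : ℤ → M) : Prop :=
  ∀ i : ℤ, dist (x (i + 1)) (f (x i)) ≤ δ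

/-- The set `M̃(f,δ)` of `δ`-pseudo-orbits, as a subset of `M^ℤ` (product topology). -/
def PseudoOrbits [MetricSpace M] (f : M → M) (δ : ℝ) : Set (ℤ → M) :=
  {x | IsPseudoOrbit f δ x}

/-- The shift `σ`. -/
def shiftSeq (x : ℤ → M) : ℤ → M := fun i => x (i + 1)

/-- The iterated shift `σ^i`. -/
def shiftIter (i : ℤ) (x : ℤ → M) : ℤ → M := fun j => x (j + i)

/-- The orbit map `orb_f(p)_i = f^i(p)`. -/
def orbitMap (f : Equiv.Perm M) (p : M) : ℤ → M := fun i => (f ^ i) p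

/-- The metric `d̃_s(x,y) = Σ_{i∈ℤ} 2^{-|i|} d(x_i,y_i)` on `M^ℤ`. -/
noncomputable def dtilde [MetricSpace M] (x y : ℤ → M) : ℝ :=
  ∑' i : ℤ, (2 : ℝ) ^ (-|i|) * dist (x i) (y i)

/-- A pseudo-orbit map: a continuous map on `M̃(f,δ)` (δ > 0) sending each true orbit
to its initial point. -/
def IsPseudoOrbitMap [MetricSpace M] (f : Equiv.Perm M) (δ : ℝ) (Po : (ℤ → M) → M) : Prop :=
  0 < δ ∧ ContinuousOn Po (PseudoOrbits (⇑f) δ) ∧ ∀ p : M, Po (orbitMap f p) = p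

/-- `Po` induces shadowing: for all `ε > 0` there is `γ ∈ (0,δ]` such that every
`γ`-pseudo-orbit `x` satisfies `d(f^i(Po x), x_i) ≤ ε` for all `i`. -/
def InducesShadowing [MetricSpace M] (f : Equiv.Perm M) (δ : ℝ) (Po : (ℤ → M) → M) : Prop :=
  ∀ ε > (0:ℝ), ∃ γ : ℝ, 0 < γ ∧ γ ≤ δ ∧ ∀ x ∈ PseudoOrbits (⇑f) γ,
    ∀ i : ℤ, dist ((f ^ i) (Po x)) (x i) ≤ ε

/-- The defining condition of a shadowing map. -/
def ShadowingMapCond [MetricSpace M] (f : Equiv.Perm M) (δ : ℝ) (Sh : (ℤ → M) → M) : Prop :=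
  ∀ ε > (0:ℝ), ∃ γ : ℝ, 0 < γ ∧ γ ≤ δ ∧ ∀ x ∈ PseudoOrbits (⇑f) γ,
    ∀ i : ℤ, dist ((f ^ i) (Sh x)) (Sh (shiftIter i x)) ≤ ε

/-- A shadowing map. -/
def IsShadowingMap [MetricSpace M] (f : Equiv.Perm M) (δ : ℝ) (Sh : (ℤ → M) → M) : Prop :=
  IsPseudoOrbitMap f δ Sh ∧ ShadowingMapCond f δ Sh

/-- The shadowing property. -/
def ShadowingProperty [MetricSpace M] (f : Equiv.Perm M) : Prop :=
  ∀ ε > (0:ℝ), ∃ δ > (0:ℝ), ∀ x ∈ PseudoOrbits (⇑f) δ,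
    ∃ p : M, ∀ i : ℤ, dist ((f ^ i) p) (x i) ≤ ε

/-- `x` is a two-sided limit pseudo-orbit: `d(f(x_i), x_{i+1}) → 0` as `|i| → ∞`. -/
def TwoSidedLimit [MetricSpace M] (f : M → M) (x : ℤ → M) : Prop :=
  Tendsto (fun i : ℤ => dist (f (x i)) (x (i + 1))) cofinite (nhds 0)

/-- The defining condition of an L-shadowing map. -/
def LShadowingMapCond [MetricSpace M] (f : Equiv.Perm M) (δ : ℝ) (Sh : (ℤ → M) → M) : Prop :=
  ∀ ε > (0:ℝ), ∃ γ : ℝ, 0 < γ ∧ γ ≤ δ ∧ ∀ x ∈ PseudoOrbits (⇑f) γ, TwoSidedLimit (⇑f) x →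
    (∀ i : ℤ, dist ((f ^ i) (Sh x)) (x i) ≤ ε) ∧
    Tendsto (fun i : ℤ => dist ((f ^ i) (Sh x)) (x i)) cofinite (nhds 0)

/-- An L-shadowing map. -/
def IsLShadowingMap [MetricSpace M] (f : Equiv.Perm M) (δ : ℝ) (Sh : (ℤ → M) → M) : Prop :=
  IsPseudoOrbitMap f δ Sh ∧ LShadowingMapCond f δ Sh

/-- Shift-invariance of a pseudo-orbit map: `Sh(σ x) = f(Sh x)` on `M̃(f,δ)`. -/
def ShiftInvariant [MetricSpace M] (f : Equiv.Perm M) (δ : ℝ) (Sh : (ℤ → M) → M) : Prop :=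
  ∀ x ∈ PseudoOrbits (⇑f) δ, Sh (shiftSeq x) = f (Sh x)

/-- Self-tuning of a pseudo-orbit map. -/
def HasSelfTuning [MetricSpace M] (f : Equiv.Perm M) (δ : ℝ) (Sh : (ℤ → M) → M) : Prop :=
  ∀ ε > (0:ℝ), ∃ γ > (0:ℝ), ∀ x ∈ PseudoOrbits (⇑f) δ, ∀ i : ℤ,
    dtilde (shiftIter i x) (orbitMap f (x i)) < γ →
    dist ((f ^ i) (Sh x)) (Sh (shiftIter i x)) ≤ ε

/-- The connecting map `con_f(p,q)`. -/
def connMap (f : Equiv.Perm M) (p q : M) : ℤ → M :=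
  fun i => if i < 0 then (f ^ i) p else (f ^ i) q

/-- Local stable set `W_ε^s(p)`. -/
def Ws [MetricSpace M] (f : Equiv.Perm M) (ε : ℝ) (p : M) : Set M :=
  {q | ∀ n : ℕ, dist ((f ^ (n : ℤ)) p) ((f ^ (n : ℤ)) q) ≤ ε}

/-- Local unstable set `W_ε^u(p)`. -/
def Wu [MetricSpace M] (f : Equiv.Perm M) (ε : ℝ) (p : M) : Set M :=
  {q | ∀ n : ℕ, dist ((f ^ (-(n : ℤ))) p) ((f ^ (-(n : ℤ))) q) ≤ ε}

/-- Stable set `W^s(p)`. -/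
def WsLim [MetricSpace M] (f : Equiv.Perm M) (p : M) : Set M :=
  {q | Tendsto (fun n : ℕ => dist ((f ^ (n : ℤ)) p) ((f ^ (n : ℤ)) q)) atTop (nhds 0)}

/-- Unstable set `W^u(p)`. -/
def WuLim [MetricSpace M] (f : Equiv.Perm M) (p : M) : Set M :=
  {q | Tendsto (fun n : ℕ => dist ((f ^ (-(n : ℤ))) p) ((f ^ (-(n : ℤ))) q)) atTop (nhds 0)}

/-- A shadowing bracket on `Δ_δ`. -/
def IsShadowingBracket [MetricSpace M] (f : Equiv.Perm M) (δ : ℝ) (br : M → M → M) : Prop :=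
  0 < δ ∧ ContinuousOn (fun pq : M × M => br pq.1 pq.2) {pq : M × M | dist pq.1 pq.2 ≤ δ} ∧
  (∀ p : M, br p p = p) ∧
  ∀ ε > (0:ℝ), ∃ γ : ℝ, 0 < γ ∧ γ ≤ δ ∧
    ∀ p q : M, dist p q ≤ γ → br p q ∈ Ws f ε q ∩ Wu f ε p

/-- An L-bracket on `Δ_δ`. -/
def IsLBracket [MetricSpace M] (f : Equiv.Perm M) (δ : ℝ) (br : M → M → M) : Prop :=
  0 < δ ∧ ContinuousOn (fun pq : M × M => br pq.1 pq.2) {pq : M × M | dist pq.1 pq.2 ≤ δ} ∧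
  (∀ p : M, br p p = p) ∧
  ∀ ε > (0:ℝ), ∃ γ : ℝ, 0 < γ ∧ γ ≤ δ ∧
    ∀ p q : M, dist p q ≤ γ →
      br p q ∈ (Ws f ε q ∩ WsLim f q) ∩ (Wu f ε p ∩ WuLim f p)

/-- cw-expansivity. -/
def CWExpansive [MetricSpace M] (f : Equiv.Perm M) : Prop :=
  ∃ ξ > (0:ℝ), ∀ C : Set M, IsConnected C →
    (∀ i : ℤ, Metric.diam ((f ^ i) '' C) ≤ ξ) → C.Subsingleton

/-- Expansivity. -/
def Expansive [MetricSpace M] (f : Equiv.Perm M) : Prop :=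
  ∃ ξ > (0:ℝ), ∀ p q : M, p ≠ q → ∃ i : ℤ, ξ < dist ((f ^ i) p) ((f ^ i) q)

private lemma zpow_succ_apply' {M : Type*} (f : Equiv.Perm M) (i : ℤ) (y : M) :
    (f ^ (i + 1)) y = f ((f ^ i) y) := by
  rw [add_comm, zpow_add, zpow_one, Equiv.Perm.mul_apply]

private lemma zpow_add_apply' {M : Type*} (f : Equiv.Perm M) (i j : ℤ) (y : M) :
    (f ^ (i + j)) y = (f ^ i) ((f ^ j) y) := by
  rw [zpow_add, Equiv.Perm.mul_apply]

private lemma perm_zpow_cont {M : Type*} [TopologicalSpace M] (f : Equiv.Perm M)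
    (hf : Continuous ⇑f) (hf' : Continuous ⇑f.symm) (j : ℤ) : Continuous ⇑(f ^ j) := by
  induction j using Int.induction_on with
  | zero => simpa using continuous_id
  | succ i ih =>
      have h : ⇑(f ^ ((i : ℤ) + 1)) = ⇑f ∘ ⇑(f ^ (i : ℤ)) :=
        funext fun y => zpow_succ_apply' f _ y
      rw [h]; exact hf.comp ih
  | pred i ih =>
      have h : ⇑(f ^ (-(i : ℤ) - 1)) = ⇑f.symm ∘ ⇑(f ^ (-(i : ℤ))) := by
        funext y
        have h2 := zpow_succ_apply' f (-(i : ℤ) - 1) y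
        rw [show (-(i : ℤ) - 1 + 1) = -(i : ℤ) by ring] at h2
        show (f ^ (-(i : ℤ) - 1)) y = f.symm ((f ^ (-(i : ℤ))) y)
        rw [h2, Equiv.symm_apply_apply]
      rw [h]; exact hf'.comp ih

private lemma shiftIter_mem' {M : Type*} [MetricSpace M] {f : M → M} {δ : ℝ} {x : ℤ → M}
    (hx : x ∈ PseudoOrbits f δ) (n : ℤ) : shiftIter n x ∈ PseudoOrbits f δ := by
  intro i
  have h := hx (i + n)
  simpa [shiftIter, add_right_comm i n 1] using h

private lemma orbit_mem' {M : Type*} [MetricSpace M] (f : Equiv.Perm M) {δ : ℝ} (hδ : 0 ≤ δ)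
    (r : M) : orbitMap f r ∈ PseudoOrbits (⇑f) δ := by
  intro i
  simp [orbitMap, zpow_succ_apply' f i r, hδ]

private lemma conn_mem' {M : Type*} [MetricSpace M] (f : Equiv.Perm M) {δ : ℝ} {p q : M}
    (hpq : dist p q ≤ δ) : connMap f p q ∈ PseudoOrbits (⇑f) δ := by
  have hδ : 0 ≤ δ := dist_nonneg.trans hpq
  intro i
  show dist (connMap f p q (i + 1)) (f (connMap f p q i)) ≤ δ
  unfold connMap
  by_cases h1 : i + 1 < 0
  · have hi : i < 0 := by omega
    rw [if_pos h1, if_pos hi, ← zpow_succ_apply', dist_self]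
    exact hδ
  · by_cases hi : i < 0
    · have hie : i = -1 := by omega
      subst hie
      rw [if_neg h1, if_pos hi]
      have hp : f ((f ^ (-1 : ℤ)) p) = p := by
        rw [← zpow_succ_apply']; norm_num
      rw [hp]
      simpa [dist_comm] using hpq
    · rw [if_neg h1, if_neg hi, ← zpow_succ_apply', dist_self]
      exact hδ

private lemma sh_shiftIter' {M : Type*} [MetricSpace M] (f : Equiv.Perm M) {δ : ℝ}
    {Sh : (ℤ → M) → M} (hsi : ShiftInvariant f δ Sh) {x : ℤ → M}
    (hx : x ∈ PseudoOrbits (⇑f) δ) :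
    ∀ n : ℤ, Sh (shiftIter n x) = (f ^ n) (Sh x) := by
  have hshift : ∀ n : ℤ, shiftSeq (shiftIter n x) = shiftIter (n + 1) x := by
    intro n; funext j
    show x (j + 1 + n) = x (j + (n + 1))
    congr 1; ring
  have h0 : shiftIter 0 x = x := funext fun j => by simp [shiftIter]
  intro n
  induction n using Int.induction_on with
  | zero => rw [h0]; simp
  | succ i ih =>
      rw [← hshift i, hsi _ (shiftIter_mem' hx i), ih, ← zpow_succ_apply']
  | pred i ih =>
      apply f.injective
      rw [← hsi _ (shiftIter_mem' hx _), hshift,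
        show (-(i : ℤ) - 1 + 1) = -(i : ℤ) by ring, ih, ← zpow_succ_apply',
        show (-(i : ℤ) - 1 + 1) = -(i : ℤ) by ring]

/-- Proposition 6.15: the bracket `[p,q] = Sh_f(con_f(p,q))` induced by a
shift-invariant shadowing map has uniform contraction. -/
theorem stmt15 {M : Type*} [MetricSpace M] [CompactSpace M]
    (f : Equiv.Perm M) (hf : Continuous (⇑f)) (hf' : Continuous (⇑f.symm))
    (δ : ℝ) (Sh : (ℤ → M) → M)
    (hSh : IsShadowingMap f δ Sh) (hsi : ShiftInvariant f δ Sh) :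
    ∀ ε > (0:ℝ), ∃ m : ℕ, 1 ≤ m ∧ ∀ p q : M, dist p q ≤ δ → ∀ n : ℕ, m ≤ n →
      dist ((f ^ (n : ℤ)) (Sh (connMap f p q))) ((f ^ (n : ℤ)) q) < ε ∧
      dist ((f ^ (-(n : ℤ))) (Sh (connMap f p q))) ((f ^ (-(n : ℤ))) p) < ε := by
  obtain ⟨⟨hδ, hcont, horb⟩, -⟩ := hSh
  intro ε hε
  by_contra hcon
  push_neg at hcon
  choose p q hpq n hn hfail using fun k : ℕ => hcon (k + 1) (Nat.le_add_left 1 k)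
  -- sequences of endpoints
  set g : ℕ → M := fun k => (f ^ (n k : ℤ)) (q k) with hgdef
  set g2 : ℕ → M := fun k => (f ^ (-(n k : ℤ))) (p k) with hg2def
  obtain ⟨r, -, φ, hφmono, hφ⟩ :=
    isCompact_univ.tendsto_subseq (x := g) (fun k => Set.mem_univ _)
  obtain ⟨s, -, ψ, hψmono, hψ⟩ :=
    isCompact_univ.tendsto_subseq (x := fun k => g2 (φ k)) (fun k => Set.mem_univ _)
  set χ : ℕ → ℕ := fun k => φ (ψ k) with hχdef
  have hχmono : StrictMono χ := hφmono.comp hψmono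
  have hgχ : Tendsto (fun k => g (χ k)) atTop (𝓝 r) := hφ.comp hψmono.tendsto_atTop
  have hg2χ : Tendsto (fun k => g2 (χ k)) atTop (𝓝 s) := hψ
  have hNgrow : ∀ k : ℕ, (k : ℤ) + 1 ≤ (n (χ k) : ℤ) := by
    intro k
    have h1 : k ≤ χ k := hχmono.le_apply
    have h2 := hn (χ k)
    omega
  set C : ℕ → (ℤ → M) := fun k => connMap f (p (χ k)) (q (χ k)) with hCdef
  have hCmem : ∀ k, C k ∈ PseudoOrbits (⇑f) δ := fun k => conn_mem' f (hpq (χ k))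
  set X : ℕ → (ℤ → M) := fun k => shiftIter ((n (χ k) : ℤ)) (C k) with hXdef
  set Y : ℕ → (ℤ → M) := fun k => shiftIter (-(n (χ k) : ℤ)) (C k) with hYdef
  have memX : ∀ k, X k ∈ PseudoOrbits (⇑f) δ := fun k => shiftIter_mem' (hCmem k) _
  have memY : ∀ k, Y k ∈ PseudoOrbits (⇑f) δ := fun k => shiftIter_mem' (hCmem k) _
  have hcontf := perm_zpow_cont f hf hf'
  -- convergence of the shifted connecting orbits
  have hXtend : Tendsto X atTop (𝓝 (orbitMap f r)) := by
    rw [tendsto_pi_nhds]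
    intro j
    have hcongr : ∀ᶠ k in atTop, (f ^ j) (g (χ k)) = X k j := by
      filter_upwards [eventually_ge_atTop j.natAbs] with k hk
      have hj : ¬ (j + (n (χ k) : ℤ) < 0) := by
        have := hNgrow k
        omega
      show (f ^ j) (g (χ k)) = connMap f (p (χ k)) (q (χ k)) (j + (n (χ k) : ℤ))
      rw [connMap, if_neg hj, zpow_add_apply']
    have : Tendsto (fun k => (f ^ j) (g (χ k))) atTop (𝓝 ((f ^ j) r)) :=
      ((hcontf j).tendsto r).comp hgχ
    exact this.congr' hcongr
  have hYtend : Tendsto Y atTop (𝓝 (orbitMap f s)) := by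
    rw [tendsto_pi_nhds]
    intro j
    have hcongr : ∀ᶠ k in atTop, (f ^ j) (g2 (χ k)) = Y k j := by
      filter_upwards [eventually_ge_atTop j.natAbs] with k hk
      have hj : j + -(n (χ k) : ℤ) < 0 := by
        have := hNgrow k
        omega
      show (f ^ j) (g2 (χ k)) = connMap f (p (χ k)) (q (χ k)) (j + -(n (χ k) : ℤ))
      rw [connMap, if_pos hj, zpow_add_apply']
    have : Tendsto (fun k => (f ^ j) (g2 (χ k))) atTop (𝓝 ((f ^ j) s)) :=
      ((hcontf j).tendsto s).comp hg2χ
    exact this.congr' hcongr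
  -- applying continuity of Sh
  have hShX : Tendsto (fun k => Sh (X k)) atTop (𝓝 r) := by
    have hc := (hcont _ (orbit_mem' f hδ.le r)).tendsto
    rw [horb r] at hc
    exact hc.comp (tendsto_nhdsWithin_iff.mpr ⟨hXtend, Eventually.of_forall memX⟩)
  have hShY : Tendsto (fun k => Sh (Y k)) atTop (𝓝 s) := by
    have hc := (hcont _ (orbit_mem' f hδ.le s)).tendsto
    rw [horb s] at hc
    exact hc.comp (tendsto_nhdsWithin_iff.mpr ⟨hYtend, Eventually.of_forall memY⟩)
  have hd1 : Tendsto (fun k => dist (Sh (X k)) (g (χ k))) atTop (𝓝 0) := by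
    simpa using hShX.dist hgχ
  have hd2 : Tendsto (fun k => dist (Sh (Y k)) (g2 (χ k))) atTop (𝓝 0) := by
    simpa using hShY.dist hg2χ
  obtain ⟨k, hk1, hk2⟩ :=
    ((hd1.eventually (gt_mem_nhds hε)).and (hd2.eventually (gt_mem_nhds hε))).exists
  have hA : dist ((f ^ (n (χ k) : ℤ)) (Sh (connMap f (p (χ k)) (q (χ k)))))
      ((f ^ (n (χ k) : ℤ)) (q (χ k))) < ε := by
    rw [← sh_shiftIter' f hsi (hCmem k) ((n (χ k) : ℤ))]
    exact hk1
  have hB : dist ((f ^ (-(n (χ k) : ℤ))) (Sh (connMap f (p (χ k)) (q (χ k)))))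
      ((f ^ (-(n (χ k) : ℤ))) (p (χ k))) < ε := by
    rw [← sh_shiftIter' f hsi (hCmem k) (-(n (χ k) : ℤ))]
    exact hk2
  exact absurd (hfail (χ k) hA) (not_le.mpr hB)
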